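/- arXiv:1503.00108 — 3 statements merged into one kernel-verified Lean document; each statement's English description precedes it below -/
import Mathlib

section
/- Let f : R → T be a homomorphism of commutative rings and let φ_T be a function from the set of ideals of T to itself. Define φ_R on ideals of R by φ_R(I) = (φ_T(Iᵉ))ᶜ, i.e. the contraction f⁻¹(φ_T(I·T)) of φ_T applied to the extension of I. If J is a φ_T-n-absorbing primary ideal of T such that φ_T(J) ⊆ φ_T(Jᶜᵉ) (where Jᶜᵉ is the extension to T of the contraction f⁻¹(J)), then Jᶜ = f⁻¹(J) is a φ_R-n-absorbing primary ideal of R. -/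
/-- A proper ideal `I` is `φ`-`n`-absorbing primary. -/
def IsPhiNAbsorbingPrimary {S : Type*} [CommRing S] (φ : Ideal S → Ideal S) (n : ℕ)
    (I : Ideal S) : Prop :=
  I ≠ ⊤ ∧ ∀ a : Fin (n + 1) → S,
    (∏ i, a i) ∈ I → (∏ i, a i) ∉ φ I →
      ((∏ i : Fin n, a i.castSucc) ∈ I ∨
        ∃ i : Fin n, (∏ j ∈ Finset.univ.erase i.castSucc, a j) ∈ I.radical)

theorem IsPhiNAbsorbingPrimary.comap {R T : Type*} [CommRing R] [CommRing T] {n : ℕ}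
    (f : R →+* T) {φ : Ideal T → Ideal T} {ψ : Ideal R → Ideal R} {J : Ideal T}
    (hJ : IsPhiNAbsorbingPrimary φ n J) (hψ : (φ J).comap f ≤ ψ (J.comap f)) :
    IsPhiNAbsorbingPrimary ψ n (J.comap f) := by
  obtain ⟨hJ_ne_top, hJ_absorbs⟩ := hJ
  refine ⟨Ideal.comap_ne_top f hJ_ne_top, fun a hmem hnot => ?_⟩
  have hmem' : (∏ i, f (a i)) ∈ J := by rwa [← map_prod]
  have hnot' : (∏ i, f (a i)) ∉ φ J := fun h =>
    hnot (hψ (by rwa [Ideal.mem_comap, map_prod]))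
  rcases hJ_absorbs (fun i => f (a i)) hmem' hnot' with h | ⟨i, hi⟩
  · left
    rwa [Ideal.mem_comap, map_prod]
  · right
    refine ⟨i, ?_⟩
    rwa [← Ideal.comap_radical, Ideal.mem_comap, map_prod]

theorem stmt_10_general {R T : Type*} [CommRing R] [CommRing T]
    (n : ℕ) (f : R →+* T) (φT : Ideal T → Ideal T)
    (J : Ideal T) (hJ : IsPhiNAbsorbingPrimary φT n J)
    (hce : φT J ≤ φT ((J.comap f).map f)) :
    IsPhiNAbsorbingPrimary (fun I : Ideal R => (φT (I.map f)).comap f) n (J.comap f) :=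
  hJ.comap f (Ideal.comap_mono hce)

/-- Theorem 2.24: if `f : R → T` is a ring homomorphism, `φ_R(I) := (φ_T(Iᵉ))ᶜ`,
and `J` is a `φ_T`-`n`-absorbing primary ideal of `T` with
`φ_T(J) ⊆ φ_T(Jᶜᵉ)`, then `Jᶜ` is a `φ_R`-`n`-absorbing primary ideal of `R`. -/
theorem stmt_10 {R T : Type*} [CommRing R] [CommRing T] [Nontrivial R] [Nontrivial T]
    (n : ℕ) (hn : 0 < n) (f : R →+* T) (φT : Ideal T → Ideal T)
    (J : Ideal T) (hJ : IsPhiNAbsorbingPrimary φT n J)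
    (hce : φT J ≤ φT ((J.comap f).map f)) :
    IsPhiNAbsorbingPrimary (fun I : Ideal R => (φT (I.map f)).comap f) n (J.comap f) :=
  stmt_10_general n f φT J hJ hce
end

section
/- Let n ≥ 2 be a natural number and let R = R₁ × R₂ × ⋯ × R_{n+1} be a direct product of n+1 commutative rings with 1 ≠ 0. Then the following conditions are equivalent: (1) R is a von Neumann regular ring; (2) every proper ideal of R is an n-almost n-absorbing primary ideal of R (i.e. φ_n-n-absorbing primary, where φ_n(J) = Jⁿ); (3) every proper ideal of R is an ω-n-absorbing primary ideal of R (i.e. φ_ω-n-absorbing primary, where φ_ω(J) = ⋂_{m=1}^{∞} Jᵐ); (4) every proper ideal of R is an n-almost n-absorbing ideal of R (i.e. φ_n-n-absorbing). -/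
/-- A proper ideal `P` is `φ`-`n`-absorbing. -/
def IsPhiNAbsorbing {S : Type*} [CommRing S] (φ : Ideal S → Ideal S) (n : ℕ)
    (P : Ideal S) : Prop :=
  P ≠ ⊤ ∧ ∀ a : Fin (n + 1) → S,
    (∏ i, a i) ∈ P → (∏ i, a i) ∉ φ P →
      ∃ i : Fin (n + 1), (∏ j ∈ Finset.univ.erase i, a j) ∈ P

/-- A commutative ring is von Neumann regular. -/
def IsVNRegular (S : Type*) [CommRing S] : Prop :=
  ∀ a : S, ∃ b : S, a = a * b * a

/-- The function `φ_ω : J ↦ ⋂_{m ≥ 1} Jᵐ`. -/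
noncomputable def phiOmega {S : Type*} [CommRing S] (J : Ideal S) : Ideal S :=
  ⨅ m : ℕ, J ^ (m + 1)

/-!
If `R` is von Neumann regular then `J ^ n = J` for every ideal `J` (and likewise `φ_ω(J) = J`), so
the defining implications are vacuous. Conversely, fix a slot `k` and `a ∈ R k`, put
`x = Pi.single k a` and `I = (x)`, and split `x` into the `n + 1` factors
`c j = Pi.mulSingle j (x j)`. The product of all factors but `c j` is `1` in slot `j`, so it lies in
`√I` only if `x j` is a unit, which forces `j = k` and `a` a unit. Hence the absorbing conditions
can only hold because `x ∈ I ^ 2`, i.e. `a ∈ a ^ 2 R k`. Either way `a` is von Neumann regular.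
-/

open Finset

section Ideals

variable {S : Type*} [CommRing S]

lemma IsVNRegular.isIdempotentElem_ideal (h : IsVNRegular S) (I : Ideal S) :
    IsIdempotentElem I := by
  refine le_antisymm Ideal.mul_le_right fun x hx => ?_
  obtain ⟨b, hb⟩ := h x
  rw [hb]
  exact Ideal.mul_mem_mul (I.mul_mem_right b hx) hx

lemma IsVNRegular.ideal_pow_eq_self (h : IsVNRegular S) (I : Ideal S) {m : ℕ} (hm : m ≠ 0) :
    I ^ m = I := by
  obtain ⟨m, rfl⟩ := Nat.exists_eq_succ_of_ne_zero hm
  exact (h.isIdempotentElem_ideal I).pow_succ_eq m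

lemma IsVNRegular.phiOmega_eq_self (h : IsVNRegular S) (I : Ideal S) : phiOmega I = I := by
  simp only [phiOmega, fun m => (h.isIdempotentElem_ideal I).pow_succ_eq m, iInf_const]

lemma exists_eq_mul_mul_of_mem_span_singleton_sq {y : S} (hy : y ∈ Ideal.span {y} ^ 2) :
    ∃ b, y = y * b * y := by
  rw [Ideal.span_singleton_pow, Ideal.mem_span_singleton'] at hy
  obtain ⟨b, hb⟩ := hy
  exact ⟨b, by linear_combination -hb⟩

lemma isUnit_map_of_mem_radical_span_singleton {T : Type*} [CommRing T] (f : S →+* T)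
    {x y : S} (hx : x ∈ (Ideal.span {y}).radical) (hfx : IsUnit (f x)) : IsUnit (f y) := by
  obtain ⟨m, hm⟩ := hx
  obtain ⟨r, hr⟩ := Ideal.mem_span_singleton'.mp hm
  have hu := hfx.pow m
  rw [← map_pow, ← hr, map_mul] at hu
  exact isUnit_of_mul_isUnit_right hu

variable {φ : Ideal S → Ideal S} {n : ℕ} {I : Ideal S}

lemma isPhiNAbsorbingPrimary_of_le (hI : I ≠ ⊤) (h : I ≤ φ I) :
    IsPhiNAbsorbingPrimary φ n I :=
  ⟨hI, fun _ ha hφ => absurd (h ha) hφ⟩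

lemma isPhiNAbsorbing_of_le (hI : I ≠ ⊤) (h : I ≤ φ I) : IsPhiNAbsorbing φ n I :=
  ⟨hI, fun _ ha hφ => absurd (h ha) hφ⟩

lemma Fin.prod_univ_castSucc_eq_prod_erase_last {M : Type*} [CommMonoid M]
    (f : Fin (n + 1) → M) : ∏ i : Fin n, f i.castSucc = ∏ j ∈ univ.erase (Fin.last n), f j := by
  have h : univ.erase (Fin.last n) = univ.map Fin.castSuccEmb := by
    ext j
    simp [Fin.exists_castSucc_eq]
  rw [h, prod_map]
  rfl

lemma IsPhiNAbsorbingPrimary.exists_prod_erase_mem_radical (h : IsPhiNAbsorbingPrimary φ n I)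
    (a : Fin (n + 1) → S) (ha : ∏ i, a i ∈ I) (hφ : ∏ i, a i ∉ φ I) :
    ∃ j, ∏ i ∈ univ.erase j, a i ∈ I.radical := by
  rcases h.2 a ha hφ with hlast | ⟨i, hi⟩
  · rw [Fin.prod_univ_castSucc_eq_prod_erase_last] at hlast
    exact ⟨_, I.le_radical hlast⟩
  · exact ⟨_, hi⟩

lemma IsPhiNAbsorbing.exists_prod_erase_mem_radical (h : IsPhiNAbsorbing φ n I)
    (a : Fin (n + 1) → S) (ha : ∏ i, a i ∈ I) (hφ : ∏ i, a i ∉ φ I) :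
    ∃ j, ∏ i ∈ univ.erase j, a i ∈ I.radical :=
  (h.2 a ha hφ).imp fun _ hj => I.le_radical hj

end Ideals

section Pi

variable {ι : Type*} {R : ι → Type*} [∀ i, CommRing (R i)]

lemma IsVNRegular.pi (h : ∀ i, IsVNRegular (R i)) : IsVNRegular (Π i, R i) := by
  intro x
  choose b hb using fun i => h i (x i)
  exact ⟨b, funext hb⟩

variable [DecidableEq ι] [∀ i, Nontrivial (R i)]

lemma Pi.eq_of_mem_radical_span_single {k : ι} {a : R k} {x : Π i, R i}
    (hx : x ∈ (Ideal.span {Pi.single k a}).radical) {j : ι} (hj : x j = 1) : j = k := by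
  by_contra hjk
  have hu := isUnit_map_of_mem_radical_span_singleton (Pi.evalRingHom R j) hx (by simp [hj])
  simp [Pi.single_eq_of_ne hjk] at hu

lemma Pi.span_single_ne_top [Nontrivial ι] (k : ι) (a : R k) :
    Ideal.span {Pi.single k a} ≠ ⊤ := by
  intro htop
  obtain ⟨j, hjk⟩ := exists_ne k
  have h1 : (1 : Π i, R i) ∈ (Ideal.span {Pi.single k a}).radical :=
    Ideal.le_radical (htop ▸ Submodule.mem_top)
  exact hjk (Pi.eq_of_mem_radical_span_single h1 rfl)

theorem IsVNRegular.of_forall_prod_erase_mem_radical [Fintype ι] [Nontrivial ι]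
    (h : ∀ I : Ideal (Π i, R i), I ≠ ⊤ → ∀ c : ι → Π i, R i,
      ∏ i, c i ∈ I → ∏ i, c i ∉ I ^ 2 → ∃ j, ∏ i ∈ univ.erase j, c i ∈ I.radical) :
    IsVNRegular (Π i, R i) := by
  refine IsVNRegular.pi fun k a => ?_
  set x : Π i, R i := Pi.single k a
  have hprod : ∏ j, Pi.mulSingle j (x j) = x := univ_prod_mulSingle x
  by_cases hsq : x ∈ Ideal.span {x} ^ 2
  · obtain ⟨b, hb⟩ := exists_eq_mul_mul_of_mem_span_singleton_sq hsq
    exact ⟨b k, by simpa [x] using congrFun hb k⟩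
  obtain ⟨j, hj⟩ := h _ (Pi.span_single_ne_top k a) (fun j => Pi.mulSingle j (x j))
    (by rw [hprod]; exact Ideal.mem_span_singleton_self x) (by rwa [hprod])
  have hj1 : (∏ i ∈ univ.erase j, Pi.mulSingle i (x i)) j = 1 := by
    simp [prod_apply, prod_pi_mulSingle]
  obtain rfl := Pi.eq_of_mem_radical_span_single hj hj1
  have hu : IsUnit a := by
    simpa [x] using isUnit_map_of_mem_radical_span_singleton (Pi.evalRingHom R j) hj (by simp)
  obtain ⟨u, rfl⟩ := hu
  exact ⟨↑u⁻¹, by simp⟩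

end Pi

/-- Corollary 3.9: for a decomposable ring `R = R₁ × ⋯ × R_{n+1}` with
`n ≥ 2`, the following are equivalent: `R` is von Neumann regular; every
proper ideal of `R` is `n`-almost `n`-absorbing primary; every proper ideal of
`R` is `ω`-`n`-absorbing primary; every proper ideal of `R` is `n`-almost
`n`-absorbing. -/
theorem stmt_17 (n : ℕ) (hn : 2 ≤ n) (R : Fin (n + 1) → Type*)
    [∀ i, CommRing (R i)] [∀ i, Nontrivial (R i)] :
    ((IsVNRegular (Π i, R i) ↔
        ∀ I : Ideal (Π i, R i), I ≠ ⊤ →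
          IsPhiNAbsorbingPrimary (fun J => J ^ n) n I) ∧
      (IsVNRegular (Π i, R i) ↔
        ∀ I : Ideal (Π i, R i), I ≠ ⊤ →
          IsPhiNAbsorbingPrimary phiOmega n I) ∧
      (IsVNRegular (Π i, R i) ↔
        ∀ I : Ideal (Π i, R i), I ≠ ⊤ →
          IsPhiNAbsorbing (fun J => J ^ n) n I)) := by
  have : Nontrivial (Fin (n + 1)) := Fin.nontrivial_iff_two_le.mpr (by omega)
  have hpow : ∀ I : Ideal (Π i, R i), I ^ n ≤ I ^ 2 := fun I => Ideal.pow_le_pow_right hn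
  have hω : ∀ I : Ideal (Π i, R i), phiOmega I ≤ I ^ 2 := fun I => iInf_le _ 1
  refine ⟨⟨fun h I hI => ?_, fun h => ?_⟩, ⟨fun h I hI => ?_, fun h => ?_⟩,
    ⟨fun h I hI => ?_, fun h => ?_⟩⟩
  · exact isPhiNAbsorbingPrimary_of_le hI (h.ideal_pow_eq_self I (by omega)).ge
  · exact .of_forall_prod_erase_mem_radical fun I hI c hc hsq =>
      (h I hI).exists_prod_erase_mem_radical c hc fun h' => hsq (hpow I h')
  · exact isPhiNAbsorbingPrimary_of_le hI (h.phiOmega_eq_self I).ge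
  · exact .of_forall_prod_erase_mem_radical fun I hI c hc hsq =>
      (h I hI).exists_prod_erase_mem_radical c hc fun h' => hsq (hω I h')
  · exact isPhiNAbsorbing_of_le hI (h.ideal_pow_eq_self I (by omega)).ge
  · exact .of_forall_prod_erase_mem_radical fun I hI c hc hsq =>
      (h I hI).exists_prod_erase_mem_radical c hc fun h' => hsq (hpow I h')
end

section
/- Let R be a Prüfer domain and I a proper ideal of R. Then I is an n-absorbing primary ideal of R if and only if the extension I[X] (the ideal of the polynomial ring R[X] consisting of polynomials all of whose coefficients lie in I, i.e. the extension of I along the coefficient embedding R → R[X]) is an n-absorbing primary ideal of R[X]. Likewise, I is a weakly n-absorbing primary ideal of R if and only if I[X] is a weakly n-absorbing primary ideal of R[X]. -/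
open scoped nonZeroDivisors

/-- A proper ideal `I` is `n`-absorbing primary. -/
def IsNAbsorbingPrimary {S : Type*} [CommRing S] (n : ℕ) (I : Ideal S) : Prop :=
  I ≠ ⊤ ∧ ∀ a : Fin (n + 1) → S,
    (∏ i, a i) ∈ I →
      ((∏ i : Fin n, a i.castSucc) ∈ I ∨
        ∃ i : Fin n, (∏ j ∈ Finset.univ.erase i.castSucc, a j) ∈ I.radical)

/-- A proper ideal `I` is weakly `n`-absorbing primary. -/
def IsWeaklyNAbsorbingPrimary {S : Type*} [CommRing S] (n : ℕ) (I : Ideal S) : Prop :=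
  I ≠ ⊤ ∧ ∀ a : Fin (n + 1) → S,
    (∏ i, a i) ≠ 0 → (∏ i, a i) ∈ I →
      ((∏ i : Fin n, a i.castSucc) ∈ I ∨
        ∃ i : Fin n, (∏ j ∈ Finset.univ.erase i.castSucc, a j) ∈ I.radical)

/-- A Prüfer domain: every nonzero finitely generated ideal is invertible. -/
def IsPruferDomain (R : Type*) [CommRing R] [IsDomain R] : Prop :=
  ∀ I : Ideal R, I ≠ ⊥ → I.FG →
    IsUnit (I : FractionalIdeal R⁰ (FractionRing R))

/-!
Over a Prüfer domain a nonzero finitely generated ideal `J` is locally principal: at a maximal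
ideal `m`, every element of `J` outside some proper subideal generates `J R_m`. This gives
Gauss's formula `c(f g) = c(f) c(g)` for content ideals (locally, `f` is a constant times a
polynomial with a unit coefficient), and it lets the `n`-absorbing primary condition for nonzero
elements pass to nonzero finitely generated ideals: local generators can be chosen outside the
primes witnessing a failure, by prime avoidance. Applied to the contents of `f₁, …, f_{n+1}` this
carries the condition from `I` to `I[X]`; constant polynomials carry it back.
-/

open Ideal Polynomial

section

variable {R : Type*} [CommRing R]

theorem Ideal.le_of_forall_isMaximal_exists_not_le_mul_le {I K : Ideal R}
    (h : ∀ m : Ideal R, m.IsMaximal → ∃ L : Ideal R, ¬ L ≤ m ∧ L * K ≤ I) : K ≤ I := by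
  intro x hx
  by_contra hxI
  have hcolon : I.colon {x} ≠ ⊤ := by
    rwa [Ne, Submodule.colon_eq_top_iff_subset, Set.singleton_subset_iff]
  obtain ⟨m, hm, hle⟩ := Ideal.exists_le_maximal _ hcolon
  obtain ⟨L, hLm, hLK⟩ := h m hm
  exact hLm fun y hy => hle (Submodule.mem_colon_singleton.2 (hLK (mul_mem_mul hy hx)))

theorem Ideal.exists_isPrime_not_le_of_not_le_radical {I K : Ideal R} (h : ¬ K ≤ I.radical) :
    ∃ P : Ideal R, P.IsPrime ∧ I ≤ P ∧ ¬ K ≤ P := by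
  rw [radical_eq_sInf, le_sInf_iff] at h
  push Not at h
  obtain ⟨P, ⟨hIP, hP⟩, hKP⟩ := h
  exact ⟨P, hP, hIP, hKP⟩

/-- `a` generates `J R_m`, stated without localizing. -/
def Ideal.IsLocalGenerator (m J : Ideal R) (a : R) : Prop :=
  a ∈ J ∧ ∃ L : Ideal R, ¬ L ≤ m ∧ L * J ≤ span {a}

theorem Ideal.IsLocalGenerator.prod {m : Ideal R} (hm : m.IsPrime) {ι : Type*} (s : Finset ι)
    {J : ι → Ideal R} {a : ι → R} (h : ∀ i, m.IsLocalGenerator (J i) (a i)) :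
    m.IsLocalGenerator (∏ i ∈ s, J i) (∏ i ∈ s, a i) := by
  choose haJ L hLm hLJ using h
  refine ⟨prod_mem_prod fun i _ => haJ i, ∏ i ∈ s, L i, fun hle => ?_, ?_⟩
  · obtain ⟨i, -, hi⟩ := hm.prod_le.1 hle
    exact hLm i hi
  calc (∏ i ∈ s, L i) * ∏ i ∈ s, J i = ∏ i ∈ s, L i * J i := Finset.prod_mul_distrib.symm
    _ ≤ ∏ i ∈ s, span {a i} := Finset.prod_le_prod' fun i _ => hLJ i
    _ = span {∏ i ∈ s, a i} := prod_span_singleton _ _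

end

section

variable {R : Type*} [CommRing R]

theorem Polynomial.contentIdeal_le_iff_mem_map_C {p : R[X]} {I : Ideal R} :
    p.contentIdeal ≤ I ↔ p ∈ I.map C :=
  ⟨fun h => mem_map_C_iff.2 fun n => h (p.coeff_mem_contentIdeal n), fun h =>
    span_le.2 fun c hc => by
      obtain ⟨n, -, rfl⟩ := mem_coeffs_iff.1 hc
      exact mem_map_C_iff.1 h n⟩

theorem Polynomial.C_mem_map_C_iff {I : Ideal R} {x : R} : C x ∈ I.map C ↔ x ∈ I :=
  ⟨fun h => by simpa using mem_map_C_iff.1 h 0, mem_map_of_mem C⟩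

theorem Polynomial.map_C_ne_top_iff {I : Ideal R} : I.map (C : R →+* R[X]) ≠ ⊤ ↔ I ≠ ⊤ := by
  simp only [ne_eq, eq_top_iff_one, ← C_1, C_mem_map_C_iff]

theorem Polynomial.mem_radical_of_C_mem_radical_map_C {I : Ideal R} {x : R}
    (h : C x ∈ (I.map C).radical) : x ∈ I.radical := by
  obtain ⟨k, hk⟩ := h
  exact ⟨k, C_mem_map_C_iff.1 (by rwa [C_pow])⟩

theorem Polynomial.span_singleton_mul_contentIdeal_le (r : R) (p : R[X]) :
    span {r} * p.contentIdeal ≤ (C r * p).contentIdeal := by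
  rw [contentIdeal_def, span_mul_span, span_le]
  rintro _ ⟨r, rfl, c, hc, rfl⟩
  obtain ⟨n, -, rfl⟩ := mem_coeffs_iff.1 hc
  simpa only [coeff_C_mul, SetLike.mem_coe] using (C r * p).coeff_mem_contentIdeal n

theorem Ideal.IsPrime.contentIdeal_mul_le {m : Ideal R} (hm : m.IsPrime) {p q : R[X]} :
    (p * q).contentIdeal ≤ m ↔ p.contentIdeal ≤ m ∨ q.contentIdeal ≤ m := by
  simp only [contentIdeal_le_iff_mem_map_C]
  exact ((isPrime_map_C_iff_isPrime m).2 hm).mul_mem_iff_mem_or_mem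

end

namespace IsPruferDomain

variable {R : Type*} [CommRing R] [IsDomain R]

theorem exists_mul_eq_span_singleton (hR : IsPruferDomain R) {J : Ideal R} (hJ : J ≠ ⊥)
    (hfg : J.FG) : ∃ (J' : Ideal R) (d : R), d ≠ 0 ∧ J * J' = span {d} := by
  obtain ⟨u, hu⟩ := hR J hJ hfg
  obtain ⟨d, J', hd, hJ'⟩ := FractionalIdeal.exists_eq_spanSingleton_mul
    (↑u⁻¹ : FractionalIdeal R⁰ (FractionRing R))
  refine ⟨J', d, hd, FractionalIdeal.coeIdeal_injective (K := FractionRing R) ?_⟩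
  have hd' : algebraMap R (FractionRing R) d ≠ 0 :=
    (map_ne_zero_iff _ (IsFractionRing.injective R (FractionRing R))).2 hd
  simp only [FractionalIdeal.coeIdeal_mul, FractionalIdeal.coeIdeal_span_singleton]
  calc (J : FractionalIdeal R⁰ (FractionRing R)) * (J' : FractionalIdeal R⁰ (FractionRing R))
      = FractionalIdeal.spanSingleton R⁰ (algebraMap R _ d) * (↑u * ↑u⁻¹) := by
        rw [hu, hJ', mul_left_comm (J : FractionalIdeal R⁰ (FractionRing R)), ← mul_assoc,
          FractionalIdeal.spanSingleton_mul_spanSingleton, mul_inv_cancel₀ hd',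
          FractionalIdeal.spanSingleton_one, one_mul]
    _ = _ := by rw [Units.mul_inv, mul_one]

/-- `B` is `(d m) : J'` where `J J' = (d)`; in localized terms it is `J ∩ m J_m`. -/
theorem exists_ideal_isLocalGenerator_of_notMem (hR : IsPruferDomain R) {J : Ideal R}
    (hJ : J ≠ ⊥) (hfg : J.FG) {m : Ideal R} (hm : m ≠ ⊤) :
    ∃ B : Ideal R, ¬ J ≤ B ∧ ∀ a ∈ J, a ∉ B → m.IsLocalGenerator J a := by
  obtain ⟨J', d, hd, hJJ'⟩ := hR.exists_mul_eq_span_singleton hJ hfg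
  refine ⟨(span {d} * m).colon (J' : Set R), fun hJB => hm ?_, fun a haJ haB => ?_⟩
  · have : span {d} * ⊤ ≤ span {d} * m := by
      rw [mul_top]
      calc span {d} = J * J' := hJJ'.symm
        _ ≤ _ := Submodule.mul_le.2 fun x hx y hy => Submodule.mem_colon.1 (hJB hx) y hy
    exact top_le_iff.1 ((span_singleton_mul_right_mono hd).1 this)
  obtain ⟨b, hb, hab⟩ : ∃ b ∈ J', a * b ∉ span {d} * m := by
    simpa [Submodule.mem_colon] using haB
  obtain ⟨t, ht⟩ := mem_span_singleton'.1 (hJJ' ▸ mul_mem_mul haJ hb : a * b ∈ span {d})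
  refine ⟨haJ, span {t}, fun htm => hab ?_, span_singleton_mul_le_iff.2 fun x hx => ?_⟩
  · exact mem_span_singleton_mul.2 ⟨t, (span_singleton_le_iff_mem m).1 htm, by rw [← ht, mul_comm]⟩
  obtain ⟨w, hw⟩ := mem_span_singleton'.1 (hJJ' ▸ mul_mem_mul hx hb : x * b ∈ span {d})
  exact mem_span_singleton'.2 ⟨w, mul_left_cancel₀ hd (by linear_combination a * hw - x * ht)⟩

theorem exists_isLocalGenerator_forall_notMem (hR : IsPruferDomain R) {J : Ideal R}
    (hJ : J ≠ ⊥) (hfg : J.FG) {m : Ideal R} (hm : m ≠ ⊤) {ι : Type*} (s : Finset ι)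
    {P : ι → Ideal R} (hP : ∀ i ∈ s, (P i).IsPrime) (hJP : ∀ i ∈ s, ¬ J ≤ P i) :
    ∃ a, m.IsLocalGenerator J a ∧ a ≠ 0 ∧ ∀ i ∈ s, a ∉ P i := by
  classical
  obtain ⟨B, hJB, hB⟩ := hR.exists_ideal_isLocalGenerator_of_notMem hJ hfg hm
  have hnot : ¬ (J : Set R) ⊆
      ⋃ o ∈ ((insert none (s.image some) : Finset (Option ι)) : Set (Option ι)),
        ((o.elim B P : Ideal R) : Set R) := by
    rw [subset_union_prime none none fun o ho h _ => ?_]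
    · rintro ⟨o, ho, hJo⟩
      rcases Finset.mem_insert.1 ho with rfl | ho
      · exact hJB hJo
      · obtain ⟨i, hi, rfl⟩ := Finset.mem_image.1 ho
        exact hJP i hi hJo
    · obtain ⟨i, hi, rfl⟩ := Finset.mem_image.1 ((Finset.mem_insert.1 ho).resolve_left h)
      exact hP i hi
  obtain ⟨a, haJ, ha⟩ := Set.not_subset.1 hnot
  simp only [Finset.coe_insert, Finset.coe_image, Set.mem_insert_iff, Set.mem_image,
    Set.iUnion_iUnion_eq_or_left, Option.elim_none, Set.mem_union, SetLike.mem_coe,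
    Set.iUnion_exists, Set.biUnion_and', Set.iUnion_iUnion_eq_right, Option.elim_some,
    Set.mem_iUnion, not_or, not_exists] at ha
  exact ⟨a, hB a haJ ha.1, fun h0 => ha.1 (h0 ▸ B.zero_mem), ha.2⟩

theorem exists_C_mul_eq_C_mul (hR : IsPruferDomain R) {m : Ideal R} (hm : m ≠ ⊤) {f : R[X]}
    (hf : f ≠ 0) :
    ∃ (s c : R) (g : R[X]), s ∉ m ∧ span {s} * f.contentIdeal ≤ span {c} ∧
      C s * f = C c * g ∧ ¬ g.contentIdeal ≤ m := by
  obtain ⟨B, hfB, hB⟩ := hR.exists_ideal_isLocalGenerator_of_notMem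
    ((contentIdeal_eq_bot_iff f).not.2 hf) f.contentIdeal_FG hm
  obtain ⟨c, hc, hcB⟩ : ∃ c ∈ f.coeffs, c ∉ B := by
    by_contra! h
    exact hfB (span_le.2 h)
  obtain ⟨i, hi, rfl⟩ := mem_coeffs_iff.1 hc
  obtain ⟨-, L, hLm, hLf⟩ := hB _ (f.coeff_mem_contentIdeal i) hcB
  obtain ⟨s, hsL, hsm⟩ := SetLike.not_le_iff_exists.1 hLm
  have hsf : span {s} * f.contentIdeal ≤ span {f.coeff i} :=
    (mul_mono_left ((span_singleton_le_iff_mem L).2 hsL)).trans hLf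
  obtain ⟨g, hg⟩ : C (f.coeff i) ∣ C s * f := by
    refine (C_dvd_iff_dvd_coeff _ _).2 fun k => ?_
    rw [coeff_C_mul, ← mem_span_singleton]
    exact hsf (mul_mem_mul (mem_span_singleton_self s) (f.coeff_mem_contentIdeal k))
  have hgi : g.coeff i = s := by
    have := congrArg (coeff · i) hg
    simp only [coeff_C_mul] at this
    exact (mul_left_cancel₀ (mem_support_iff.1 hi) (this.symm.trans (mul_comm _ _)))
  exact ⟨s, f.coeff i, g, hsm, hsf, hg,
    fun hgm => hsm (hgi ▸ hgm (g.coeff_mem_contentIdeal i))⟩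

theorem contentIdeal_mul (hR : IsPruferDomain R) (f g : R[X]) :
    (f * g).contentIdeal = f.contentIdeal * g.contentIdeal := by
  rcases eq_or_ne f 0 with rfl | hf
  · simp [contentIdeal_zero]
  rcases eq_or_ne g 0 with rfl | hg
  · simp [contentIdeal_zero]
  refine le_antisymm (contentIdeal_mul_le_mul_contentIdeal _ _)
    (le_of_forall_isMaximal_exists_not_le_mul_le fun m hm => ?_)
  obtain ⟨s, c, f', hs, hsf, hff', hf'⟩ := hR.exists_C_mul_eq_C_mul hm.ne_top hf
  obtain ⟨t, d, g', ht, htg, hgg', hg'⟩ := hR.exists_C_mul_eq_C_mul hm.ne_top hg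
  refine ⟨span {s * t} * (f' * g').contentIdeal, ?_, ?_⟩
  · rw [hm.isPrime.mul_le, hm.isPrime.contentIdeal_mul_le, span_singleton_le_iff_mem]
    exact not_or.2 ⟨hm.isPrime.mul_notMem hs ht, not_or.2 ⟨hf', hg'⟩⟩
  calc span {s * t} * (f' * g').contentIdeal * (f.contentIdeal * g.contentIdeal)
      = span {s} * f.contentIdeal * (span {t} * g.contentIdeal) * (f' * g').contentIdeal := by
        rw [← span_singleton_mul_span_singleton]; ring
    _ ≤ span {c} * span {d} * (f' * g').contentIdeal := by gcongr
    _ ≤ (C (c * d) * (f' * g')).contentIdeal := by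
        rw [span_singleton_mul_span_singleton]; exact span_singleton_mul_contentIdeal_le _ _
    _ = (C (s * t) * (f * g)).contentIdeal := by
        rw [C_mul, C_mul, mul_mul_mul_comm, ← hff', ← hgg', mul_mul_mul_comm]
    _ ≤ (f * g).contentIdeal := contentIdeal_le_contentIdeal_of_dvd (dvd_mul_left _ _)

theorem contentIdeal_prod (hR : IsPruferDomain R) {ι : Type*} (s : Finset ι) (f : ι → R[X]) :
    (∏ i ∈ s, f i).contentIdeal = ∏ i ∈ s, (f i).contentIdeal :=
  map_prod (MonoidHom.mk ⟨contentIdeal, contentIdeal_one.trans one_eq_top.symm⟩ hR.contentIdeal_mul)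
    f s

end IsPruferDomain

def IsNAbsorbingPrimaryOnNonzero {S : Type*} [CommRing S] (n : ℕ) (I : Ideal S) : Prop :=
  ∀ a : Fin (n + 1) → S, (∀ k, a k ≠ 0) → (∏ i, a i) ∈ I →
    (∏ i : Fin n, a i.castSucc) ∈ I ∨
      ∃ i : Fin n, (∏ j ∈ Finset.univ.erase i.castSucc, a j) ∈ I.radical

section

variable {S : Type*} [CommRing S] {n : ℕ} {I : Ideal S}

theorem isNAbsorbingPrimary_iff (hn : 0 < n) :
    IsNAbsorbingPrimary n I ↔ I ≠ ⊤ ∧ IsNAbsorbingPrimaryOnNonzero n I := by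
  refine and_congr_right fun _ => ⟨fun h a _ => h a, fun h a ha => ?_⟩
  by_cases ha0 : ∀ k, a k ≠ 0
  · exact h a ha0 ha
  push Not at ha0
  obtain ⟨k, hk⟩ := ha0
  rcases Fin.eq_castSucc_or_eq_last k with ⟨k, rfl⟩ | rfl
  · left
    rw [Finset.prod_eq_zero (f := fun i : Fin n => a i.castSucc) (Finset.mem_univ k) hk]
    exact I.zero_mem
  · refine Or.inr ⟨⟨0, hn⟩, Finset.prod_eq_zero ?_ hk ▸ I.radical.zero_mem⟩
    exact Finset.mem_erase.2 ⟨(Fin.castSucc_lt_last _).ne', Finset.mem_univ _⟩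

theorem isWeaklyNAbsorbingPrimary_iff [IsDomain S] :
    IsWeaklyNAbsorbingPrimary n I ↔ I ≠ ⊤ ∧ IsNAbsorbingPrimaryOnNonzero n I := by
  refine and_congr_right fun _ => forall_congr' fun a => ?_
  rw [Finset.prod_ne_zero_iff]
  simp only [Finset.mem_univ, true_implies]

end

namespace IsPruferDomain

variable {R : Type*} [CommRing R] [IsDomain R] {n : ℕ} {I : Ideal R}

/-- If the conclusion failed, there would be primes `P i ⊇ I` with `J j ⊄ P i` for `j ≠ i`;
locally at a maximal ideal, generators of the `J j` chosen outside these primes then contradict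
the condition for elements. -/
theorem prod_le_or_of_isNAbsorbingPrimaryOnNonzero (hR : IsPruferDomain R)
    (hI : IsNAbsorbingPrimaryOnNonzero n I) (J : Fin (n + 1) → Ideal R) (hJfg : ∀ k, (J k).FG)
    (hJ : ∀ k, J k ≠ ⊥) (hJI : ∏ k, J k ≤ I) :
    (∏ i : Fin n, J i.castSucc) ≤ I ∨
      ∃ i : Fin n, (∏ j ∈ Finset.univ.erase i.castSucc, J j) ≤ I.radical := by
  classical
  by_contra! h
  obtain ⟨hleft, hright⟩ := h
  have hP : ∀ i : Fin n, ∃ P : Ideal R, P.IsPrime ∧ I ≤ P ∧ ∀ j, j ≠ i.castSucc → ¬ J j ≤ P := by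
    intro i
    obtain ⟨P, hP, hIP, hJP⟩ := exists_isPrime_not_le_of_not_le_radical (hright i)
    refine ⟨P, hP, hIP, fun j hj hjP => hJP (le_trans ?_ hjP)⟩
    exact prod_le_inf.trans (Finset.inf_le (Finset.mem_erase.2 ⟨hj, Finset.mem_univ j⟩))
  choose P hP hIP hJP using hP
  refine hleft (le_of_forall_isMaximal_exists_not_le_mul_le fun m hm => ?_)
  have hgen := fun k => hR.exists_isLocalGenerator_forall_notMem (hJ k) (hJfg k) hm.ne_top
    (Finset.univ.filter fun i : Fin n => i.castSucc ≠ k) (fun i _ => hP i)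
    (fun i hi => hJP i k (Finset.mem_filter.1 hi).2.symm)
  choose a hloc ha0 haP using hgen
  rcases hI a ha0 (hJI (IsLocalGenerator.prod hm.isPrime _ hloc).1) with h | ⟨i, hi⟩
  · obtain ⟨-, L, hLm, hLJ⟩ :=
      IsLocalGenerator.prod hm.isPrime Finset.univ fun i : Fin n => hloc i.castSucc
    exact ⟨L, hLm, hLJ.trans ((span_singleton_le_iff_mem I).2 h)⟩
  · obtain ⟨j, hj, hjP⟩ := (hP i).prod_mem_iff.1 (((hP i).radical_le_iff.2 (hIP i)) hi)
    have hji : i.castSucc ≠ j := (Finset.mem_erase.1 hj).1.symm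
    exact (haP j i (Finset.mem_filter.2 ⟨Finset.mem_univ i, hji⟩) hjP).elim

theorem isNAbsorbingPrimaryOnNonzero_map_C_iff (hR : IsPruferDomain R) :
    IsNAbsorbingPrimaryOnNonzero n (I.map (C : R →+* R[X])) ↔
      IsNAbsorbingPrimaryOnNonzero n I := by
  constructor
  · intro h a ha0 ha
    have hCa := h (fun k => C (a k)) (fun k => C_ne_zero.2 (ha0 k))
      (by simpa only [← map_prod, C_mem_map_C_iff] using ha)
    simp only [← map_prod, C_mem_map_C_iff] at hCa
    exact hCa.imp_right fun ⟨i, hi⟩ => ⟨i, mem_radical_of_C_mem_radical_map_C hi⟩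
  · intro h f hf0 hf
    rw [← contentIdeal_le_iff_mem_map_C, hR.contentIdeal_prod] at hf
    rcases hR.prod_le_or_of_isNAbsorbingPrimaryOnNonzero h _ (fun k => (f k).contentIdeal_FG)
      (fun k => (contentIdeal_eq_bot_iff _).not.2 (hf0 k)) hf with hl | ⟨i, hi⟩
    · left
      rwa [← contentIdeal_le_iff_mem_map_C, hR.contentIdeal_prod]
    · right
      refine ⟨i, map_radical_le C ?_⟩
      rwa [← contentIdeal_le_iff_mem_map_C, hR.contentIdeal_prod]

end IsPruferDomain

theorem stmt_19_general {R : Type*} [CommRing R] [IsDomain R] (hR : IsPruferDomain R)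
    (n : ℕ) (hn : 0 < n) (I : Ideal R) :
    (IsNAbsorbingPrimary n I ↔
        IsNAbsorbingPrimary n (I.map (Polynomial.C : R →+* Polynomial R))) ∧
      (IsWeaklyNAbsorbingPrimary n I ↔
        IsWeaklyNAbsorbingPrimary n (I.map (Polynomial.C : R →+* Polynomial R))) := by
  simp only [isNAbsorbingPrimary_iff hn, isWeaklyNAbsorbingPrimary_iff, map_C_ne_top_iff,
    hR.isNAbsorbingPrimaryOnNonzero_map_C_iff, and_self]

/-- Corollary 5.9: over a Prüfer domain `R`, an ideal `I` is `n`-absorbing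
primary (resp. weakly `n`-absorbing primary) iff `I[X]` is `n`-absorbing
primary (resp. weakly `n`-absorbing primary) in `R[X]`. -/
theorem stmt_19 {R : Type*} [CommRing R] [IsDomain R] (hR : IsPruferDomain R)
    (n : ℕ) (hn : 0 < n) (I : Ideal R) (hI : I ≠ ⊤) :
    (IsNAbsorbingPrimary n I ↔
        IsNAbsorbingPrimary n (I.map (Polynomial.C : R →+* Polynomial R))) ∧
      (IsWeaklyNAbsorbingPrimary n I ↔
        IsWeaklyNAbsorbingPrimary n (I.map (Polynomial.C : R →+* Polynomial R))) :=
  stmt_19_general hR n hn I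
end
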